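/- Let α₁, α₂, β₁, β₂ ∈ ℂ and set ã₁ = (−α₁, 1)ᵀ, ã₂ = (α₂, −1)ᵀ, b̃₁ = (−β₁, 1)ᵀ, b̃₂ = (β₂, −1)ᵀ. Then for every vector ϑ ∈ ℂ¹⁰ lying in the linear span of θ(ã₁ b̃₁ᵀ, ã₂ b̃₂ᵀ) and θ(ã₂ b̃₁ᵀ, ã₁ b̃₂ᵀ), the 3×3 matrix (𝒮 ∘ M)(ϑ) is a scalar multiple of (α₁α₂, −(α₁+α₂), 1)ᵀ · (β₁β₂, −(β₁+β₂), 1); in particular rank (𝒮 ∘ M)(ϑ) ≤ 1. -/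
import Mathlib


open Matrix

/-- The bilinear map `θ : ℂ^{2×2} × ℂ^{2×2} → ℂ¹⁰`, with `U = [[u₁,u₃],[u₂,u₄]]`,
`V = [[v₁,v₃],[v₂,v₄]]`. -/
noncomputable def thetaMap (U V : Matrix (Fin 2) (Fin 2) ℂ) : Fin 10 → ℂ :=
  ![U 0 0 * V 0 0, U 1 0 * V 1 0, U 0 1 * V 0 1, U 1 1 * V 1 1,
    U 0 0 * V 1 0 + U 1 0 * V 0 0, U 0 0 * V 0 1 + U 0 1 * V 0 0,
    U 0 0 * V 1 1 + U 1 1 * V 0 0, U 1 0 * V 0 1 + U 0 1 * V 1 0,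
    U 1 0 * V 1 1 + U 1 1 * V 1 0, U 0 1 * V 1 1 + U 1 1 * V 0 1]

/-- The composition `𝒮 ∘ M : ℂ¹⁰ → ℂ^{3×3}`, given explicitly by
`(𝒮 ∘ M)(ϑ) = [[ϑ₁, ϑ₆, ϑ₃],[ϑ₅, ϑ₇+ϑ₈, ϑ₁₀],[ϑ₂, ϑ₉, ϑ₄]]`. -/
noncomputable def SM (ϑ : Fin 10 → ℂ) : Matrix (Fin 3) (Fin 3) ℂ :=
  !![ϑ 0, ϑ 5,       ϑ 2;
     ϑ 4, ϑ 6 + ϑ 7, ϑ 9;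
     ϑ 1, ϑ 8,       ϑ 3]

set_option maxHeartbeats 1600000 in
/-- With `a1 = (−α₁,1)ᵀ`, `a2 = (α₂,−1)ᵀ`, `b1 = (−β₁,1)ᵀ`, `b2 = (β₂,−1)ᵀ`,
every `ϑ` in the span of `θ(a1 b1ᵀ, a2 b2ᵀ)` and `θ(a2 b1ᵀ, a1 b2ᵀ)` satisfies: `(𝒮 ∘ M)(ϑ)`
is a scalar multiple of `(α₁α₂, −(α₁+α₂), 1)ᵀ (β₁β₂, −(β₁+β₂), 1)`;
in particular `rank (𝒮 ∘ M)(ϑ) ≤ 1`. -/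
theorem SM_on_span_rank_le_one
    (α₁ α₂ β₁ β₂ : ℂ)
    (a1 a2 b1 b2 : Fin 2 → ℂ)
    (ha1 : a1 = ![-α₁, 1]) (ha2 : a2 = ![α₂, -1])
    (hb1 : b1 = ![-β₁, 1]) (hb2 : b2 = ![β₂, -1]) :
    ∀ ϑ ∈ Submodule.span ℂ
        {thetaMap (vecMulVec a1 b1) (vecMulVec a2 b2),
         thetaMap (vecMulVec a2 b1) (vecMulVec a1 b2)},
      (∃ c : ℂ, SM ϑ
          = c • vecMulVec ![α₁ * α₂, -(α₁ + α₂), 1] ![β₁ * β₂, -(β₁ + β₂), 1]) ∧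
        (SM ϑ).rank ≤ 1 := by
  subst ha1 ha2 hb1 hb2
  intro ϑ hϑ
  rw [Submodule.mem_span_pair] at hϑ
  obtain ⟨a, b, rfl⟩ := hϑ
  have key : SM (a • thetaMap (vecMulVec ![-α₁,1] ![-β₁,1]) (vecMulVec ![α₂,-1] ![β₂,-1]) +
      b • thetaMap (vecMulVec ![α₂,-1] ![-β₁,1]) (vecMulVec ![-α₁,1] ![β₂,-1]))
      = (a + b) • vecMulVec ![α₁ * α₂, -(α₁ + α₂), 1] ![β₁ * β₂, -(β₁ + β₂), 1] := by
    ext i j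
    fin_cases i <;> fin_cases j <;>
      simp [SM, thetaMap, vecMulVec_apply, Matrix.smul_apply, Matrix.of_apply, Pi.add_apply, Pi.smul_apply, smul_eq_mul, Matrix.cons_val_succ,
        show (5:Fin 10) = Fin.succ 4 from rfl,
        show (6:Fin 10) = Fin.succ 5 from rfl,
        show (7:Fin 10) = Fin.succ 6 from rfl,
        show (8:Fin 10) = Fin.succ 7 from rfl,
        show (9:Fin 10) = Fin.succ 8 from rfl,
        show (5:Fin 9) = Fin.succ 4 from rfl,
        show (6:Fin 9) = Fin.succ 5 from rfl,
        show (7:Fin 9) = Fin.succ 6 from rfl,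
        show (8:Fin 9) = Fin.succ 7 from rfl,
        show (5:Fin 8) = Fin.succ 4 from rfl,
        show (6:Fin 8) = Fin.succ 5 from rfl,
        show (7:Fin 8) = Fin.succ 6 from rfl,
        show (5:Fin 7) = Fin.succ 4 from rfl,
        show (6:Fin 7) = Fin.succ 5 from rfl,
        show (5:Fin 6) = Fin.succ 4 from rfl] <;> ring
  refine ⟨⟨a + b, key⟩, ?_⟩
  rw [key, show (a + b) • vecMulVec ![α₁ * α₂, -(α₁ + α₂), 1] ![β₁ * β₂, -(β₁ + β₂), 1]
      = vecMulVec ((a + b) • ![α₁ * α₂, -(α₁ + α₂), 1]) ![β₁ * β₂, -(β₁ + β₂), 1] by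
    ext i j; simp [vecMulVec, Matrix.smul_apply]; ring]
  rw [vecMulVec_eq (Fin 1)]
  exact (Matrix.rank_mul_le_left _ _).trans ((Matrix.rank_le_card_width _).trans (by simp))
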